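/- For nonzero ideals A, B in a Dedekind domain R, there is an R-module isomorphism A ⊕ B ≅ R ⊕ AB (Steinitz isomorphism theorem). -/

import Mathlib

/-!
If `I ⊔ J = ⊤`, say `y + z = 1` with `y ∈ I`, `z ∈ J`, then `(x, e) ↦ x + e` maps `I × J` onto
`R` with the section `r ↦ (r y, r z)`; the complementary projection `(x, e) ↦ x z - y e` lands in
`I J`, so `I × J ≅ R × I J`.

In general, the ideal `A` can be moved within its ideal class to some `A'` with `A' ⊔ B = ⊤`:
choose `a ≠ 0` with `A B ⊔ (a) = A`, write `(a) = A C`, so `C ⊔ B = ⊤`; doing this twice gives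
`(a) A = (b) A'` with `A' ⊔ B = ⊤`. Multiplication by `b / a` then gives `A ≅ A'` and `A B ≅ A' B`.
-/

namespace Ideal

section CommRing

variable {R : Type*} [CommRing R] {I J : Ideal R}

def prodEquivOfAddEqOne {y z : R} (hy : y ∈ I) (hz : z ∈ J) (hyz : y + z = 1) :
    (I × J) ≃ₗ[R] (R × ↥(I * J)) where
  toFun p := ((p.1 : R) + p.2,
    ⟨p.1 * z - y * p.2, Ideal.sub_mem _ (mul_mem_mul p.1.2 hz) (mul_mem_mul hy p.2.2)⟩)
  invFun w := (⟨w.1 * y + w.2, Ideal.add_mem _ (I.mul_mem_left _ hy) (Ideal.mul_le_left w.2.2)⟩,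
    ⟨w.1 * z - w.2, Ideal.sub_mem _ (J.mul_mem_left _ hz) (Ideal.mul_le_right w.2.2)⟩)
  map_add' p q := by
    ext <;> simp only [Prod.fst_add, Prod.snd_add, Submodule.coe_add, Prod.mk_add_mk,
      AddMemClass.mk_add_mk] <;> ring
  map_smul' r p := by
    ext <;> simp only [Prod.smul_fst, Prod.smul_snd, SetLike.val_smul, smul_eq_mul,
      RingHom.id_apply, Prod.smul_mk, SetLike.mk_smul_mk] <;> ring
  left_inv p := by
    ext
    · linear_combination (p.1 : R) * hyz
    · linear_combination (p.2 : R) * hyz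
  right_inv w := by
    ext
    · linear_combination w.1 * hyz
    · linear_combination (w.2 : R) * hyz

theorem nonempty_prodEquiv_of_sup_eq_top (h : I ⊔ J = ⊤) :
    Nonempty ((I × J) ≃ₗ[R] (R × ↥(I * J))) := by
  obtain ⟨y, hy, z, hz, hyz⟩ := Submodule.mem_sup.mp (h ▸ Submodule.mem_top : (1 : R) ∈ I ⊔ J)
  exact ⟨prodEquivOfAddEqOne hy hz hyz⟩

end CommRing

section IsDomain

variable {R : Type*} [CommRing R] [IsDomain R]

open Pointwise in
noncomputable def equivSpanSingletonMul {a : R} (ha : a ≠ 0) (I : Ideal R) :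
    I ≃ₗ[R] ↥(span {a} * I) :=
  (Submodule.equivMapOfInjective (DistribSMul.toLinearMap R R a) (mul_right_injective₀ ha)
    I).trans (LinearEquiv.ofEq _ _ (by
      rw [← Submodule.pointwise_smul_def, ← Submodule.ideal_span_singleton_smul, smul_eq_mul]))

noncomputable def equivOfSpanSingletonMulEq {a b : R} (ha : a ≠ 0) (hb : b ≠ 0) {I J : Ideal R}
    (h : span {a} * I = span {b} * J) : I ≃ₗ[R] J :=
  (equivSpanSingletonMul ha I).trans
    ((LinearEquiv.ofEq _ _ h).trans (equivSpanSingletonMul hb J).symm)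

end IsDomain

section IsDedekindDomain

variable {R : Type*} [CommRing R] [IsDedekindDomain R] {A B : Ideal R}

theorem exists_ne_zero_mul_sup_span_singleton_eq (hA : A ≠ ⊥) (hB : B ≠ ⊥) :
    ∃ a ≠ 0, A * B ⊔ span {a} = A := by
  obtain ⟨a, ha⟩ := IsDedekindDomain.exists_sup_span_eq mul_le_left (mul_ne_zero hA hB)
  rcases eq_or_ne a 0 with rfl | ha0
  · obtain ⟨m, hmA, hm0⟩ := Submodule.exists_mem_ne_zero_of_ne_bot hA
    rw [span_singleton_eq_bot.mpr rfl, sup_bot_eq] at ha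
    exact ⟨m, hm0, by rwa [ha, sup_eq_left, span_singleton_le_iff_mem]⟩
  · exact ⟨a, ha0, ha⟩

theorem exists_span_singleton_eq_mul_sup_eq_top (hA : A ≠ ⊥) (hB : B ≠ ⊥) :
    ∃ a ≠ 0, ∃ C : Ideal R, span {a} = A * C ∧ C ⊔ B = ⊤ := by
  obtain ⟨a, ha0, ha⟩ := exists_ne_zero_mul_sup_span_singleton_eq hA hB
  obtain ⟨C, hC⟩ : A ∣ span {a} := dvd_iff_le.mpr (ha ▸ le_sup_right)
  refine ⟨a, ha0, C, hC, ?_⟩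
  apply mul_left_cancel₀ hA
  rw [mul_sup, ← hC, sup_comm, ha, mul_top]

theorem exists_span_singleton_mul_eq_sup_eq_top (hA : A ≠ ⊥) (hB : B ≠ ⊥) :
    ∃ a ≠ 0, ∃ b ≠ 0, ∃ A' : Ideal R, span {a} * A = span {b} * A' ∧ A' ⊔ B = ⊤ := by
  obtain ⟨a, ha0, C, hAC, -⟩ := exists_span_singleton_eq_mul_sup_eq_top hA hB
  have hC : C ≠ ⊥ := by
    rintro rfl
    rw [mul_bot, span_singleton_eq_bot] at hAC
    exact ha0 hAC
  obtain ⟨b, hb0, A', hCA', hA'B⟩ := exists_span_singleton_eq_mul_sup_eq_top hC hB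
  refine ⟨b, hb0, a, ha0, A', ?_, hA'B⟩
  rw [hAC, hCA']
  ring

end IsDedekindDomain

end Ideal

open Ideal in
theorem steinitz_isomorphism (R : Type*) [CommRing R] [IsDedekindDomain R]
    (A B : Ideal R) (hA : A ≠ ⊥) (hB : B ≠ ⊥) :
    Nonempty ((↥A × ↥B) ≃ₗ[R] (R × ↥(A * B))) := by
  obtain ⟨a, ha, b, hb, A', h, hA'B⟩ := exists_span_singleton_mul_eq_sup_eq_top hA hB
  have hAB : span {a} * (A * B) = span {b} * (A' * B) := by rw [← mul_assoc, h, mul_assoc]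
  obtain ⟨e⟩ := nonempty_prodEquiv_of_sup_eq_top hA'B
  exact ⟨((equivOfSpanSingletonMulEq ha hb h).prodCongr (LinearEquiv.refl R B)).trans <|
    e.trans ((LinearEquiv.refl R R).prodCongr (equivOfSpanSingletonMulEq ha hb hAB).symm)⟩
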